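/- The surface energy density g satisfies lim_{s→0⁺} g(s)/s = ℓ, i.e. g has slope ℓ at the origin. -/

import Mathlib

open MeasureTheory Set Filter Topology

/-- A pair of `H¹` functions on the interval `(0,T)`, described through their
absolutely continuous representatives `a`, `b` together with their
square-integrable weak derivatives `da`, `db`. -/
structure H1Pair (T : ℝ) where
  a : ℝ → ℝ
  b : ℝ → ℝ
  da : ℝ → ℝ
  db : ℝ → ℝ
  da_mem : MeasureTheory.MemLp da 2 (MeasureTheory.volume.restrict (Set.Ioo (0:ℝ) T))
  db_mem : MeasureTheory.MemLp db 2 (MeasureTheory.volume.restrict (Set.Ioo (0:ℝ) T))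
  a_ftc : ∀ x ∈ Set.Icc (0:ℝ) T, a x = a 0 + ∫ t in Set.Ioc (0:ℝ) x, da t
  b_ftc : ∀ x ∈ Set.Icc (0:ℝ) T, b x = b 0 + ∫ t in Set.Ioc (0:ℝ) x, db t

/-- Membership in the admissible class `U_s(0,T)`: `0 ≤ β ≤ 1`, `α(0)=0`, `α(T)=s`,
`β(0)=β(T)=1`. -/
def H1Pair.Admissible {T : ℝ} (s : ℝ) (P : H1Pair T) : Prop :=
  (∀ t ∈ Set.Icc (0:ℝ) T, P.b t ∈ Set.Icc (0:ℝ) 1) ∧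
  P.a 0 = 0 ∧ P.a T = s ∧ P.b 0 = 1 ∧ P.b T = 1

/-- The continuous extension of `x ↦ (1 - x) * f x` to `[0,1]`, with value `l` at `1`. -/
noncomputable def damageExt (f : ℝ → ℝ) (l : ℝ) (x : ℝ) : ℝ :=
  if x = 1 then l else (1 - x) * f x

/-- The surface energy of a pair: `∫₀¹ |1-β| √(f(β)² |α'|² + |β'|²) dt`, written as
`∫₀¹ √(((1-β) f(β))² |α'|² + (1-β)² |β'|²) dt`, where at points with `β = 1` the
product `(1-β) f(β)` is interpreted as `l`. -/
noncomputable def surfEnergy (f : ℝ → ℝ) (l : ℝ) (P : H1Pair 1) : ENNReal :=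
  ∫⁻ t in Set.Ioo (0:ℝ) 1,
    ENNReal.ofReal (Real.sqrt ((damageExt f l (P.b t))^2 * (P.da t)^2
      + (1 - P.b t)^2 * (P.db t)^2))

/-- The surface energy density `g(s)`. -/
noncomputable def surfDensity (f : ℝ → ℝ) (l : ℝ) (s : ℝ) : ℝ :=
  (⨅ (P : H1Pair 1) (_ : P.Admissible s), surfEnergy f l P).toReal

/-- `f` is an admissible damage function with limit value `l`: it is continuous,
nondecreasing and nonnegative on `[0,1)`, vanishes exactly at `0`, `l ∈ (0,∞)`, and
`(1-s) f(s) → l` as `s → 1⁻`. -/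
def AdmissibleDamage (f : ℝ → ℝ) (l : ℝ) : Prop :=
  ContinuousOn f (Set.Ico 0 1) ∧
  MonotoneOn f (Set.Ico 0 1) ∧
  (∀ x ∈ Set.Ico (0:ℝ) 1, 0 ≤ f x) ∧
  (∀ x ∈ Set.Ico (0:ℝ) 1, (f x = 0 ↔ x = 0)) ∧
  0 < l ∧
  Filter.Tendsto (fun x => (1 - x) * f x) (nhdsWithin 1 (Set.Iio 1)) (nhds l)

lemma SPF.integrableOn_Icc (h : ℝ → ℝ)
    (hm : MemLp h 2 (volume.restrict (Ioo (0:ℝ) 1))) :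
    IntegrableOn h (Icc (0:ℝ) 1) := by
  rw [integrableOn_Icc_iff_integrableOn_Ioo]
  exact hm.integrable (by norm_num)

lemma SPF.cont_b (P : H1Pair 1) : ContinuousOn P.b (Icc (0:ℝ) 1) := by
  have hint : IntegrableOn P.db (Icc (0:ℝ) 1) := SPF.integrableOn_Icc _ P.db_mem
  have h2 : ContinuousOn (fun x => P.b 0 + ∫ t in Ioc (0:ℝ) x, P.db t) (Icc (0:ℝ) 1) :=
    continuousOn_const.add (intervalIntegral.continuousOn_primitive hint)
  exact h2.congr (fun x hx => P.b_ftc x hx)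

lemma SPF.ftc_sub (P : H1Pair 1) {u v : ℝ} (hu : 0 ≤ u) (huv : u ≤ v) (hv : v ≤ 1) :
    ∫ t in Ioc u v, P.db t = P.b v - P.b u := by
  have hint : IntegrableOn P.db (Icc (0:ℝ) 1) := SPF.integrableOn_Icc _ P.db_mem
  have h1 := P.b_ftc u ⟨hu, huv.trans hv⟩
  have h2 := P.b_ftc v ⟨hu.trans huv, hv⟩
  have hsplit : (∫ t in Ioc (0:ℝ) u, P.db t) + ∫ t in Ioc u v, P.db t
      = ∫ t in Ioc (0:ℝ) v, P.db t := by
    rw [← MeasureTheory.setIntegral_union (Set.Ioc_disjoint_Ioc_of_le le_rfl) measurableSet_Ioc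
      (hint.mono_set (Set.Ioc_subset_Icc_self.trans (Icc_subset_Icc le_rfl (huv.trans hv))))
      (hint.mono_set ((Set.Ioc_subset_Icc_self).trans (Icc_subset_Icc hu hv)))]
    rw [Set.Ioc_union_Ioc_eq_Ioc hu huv]
  rw [h1, h2, ← hsplit]; ring

lemma SPF.lint_abs_ge (P : H1Pair 1) {u v : ℝ} (hu : 0 ≤ u) (huv : u ≤ v) (hv : v ≤ 1)
    {C : ℝ} (hC : 0 ≤ C) :
    ENNReal.ofReal (C * |P.b v - P.b u|) ≤ ∫⁻ t in Ioc u v, ENNReal.ofReal (C * |P.db t|) := by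
  have hint : IntegrableOn P.db (Ioc u v) :=
    (SPF.integrableOn_Icc _ P.db_mem).mono_set ((Set.Ioc_subset_Icc_self).trans (Icc_subset_Icc hu hv))
  have h1 : ENNReal.ofReal (∫ t in Ioc u v, C * |P.db t|)
      = ∫⁻ t in Ioc u v, ENNReal.ofReal (C * |P.db t|) :=
    ofReal_integral_eq_lintegral_ofReal (hint.abs.const_mul C)
      (Filter.Eventually.of_forall fun t => by positivity)
  rw [← h1]
  apply ENNReal.ofReal_le_ofReal
  rw [← SPF.ftc_sub P hu huv hv, MeasureTheory.integral_const_mul]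
  refine mul_le_mul_of_nonneg_left ?_ hC
  have := MeasureTheory.norm_integral_le_integral_norm (μ := volume.restrict (Ioc u v)) P.db
  simpa [Real.norm_eq_abs] using this

noncomputable def SPF.linPair (s : ℝ) : H1Pair 1 where
  a := fun t => s * t
  b := fun _ => 1
  da := fun _ => s
  db := fun _ => 0
  da_mem := memLp_const s
  db_mem := memLp_const 0
  a_ftc := by
    intro x hx
    rw [MeasureTheory.setIntegral_const]
    simp [Real.volume_Ioc, ENNReal.toReal_ofReal hx.1, mul_comm, hx.1]
  b_ftc := by intro x hx; simp

lemma SPF.linPair_adm (s : ℝ) : (SPF.linPair s).Admissible s := by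
  refine ⟨fun t _ => ⟨zero_le_one, le_rfl⟩, ?_, ?_, rfl, rfl⟩ <;> simp [SPF.linPair]

lemma SPF.energy_linPair (f : ℝ → ℝ) (l s : ℝ) (hl : 0 ≤ l) (hs : 0 ≤ s) :
    surfEnergy f l (SPF.linPair s) = ENNReal.ofReal (l * s) := by
  unfold surfEnergy
  have : ∀ t : ℝ, ENNReal.ofReal (Real.sqrt ((damageExt f l ((SPF.linPair s).b t))^2
      * ((SPF.linPair s).da t)^2 + (1 - (SPF.linPair s).b t)^2 * ((SPF.linPair s).db t)^2))
      = ENNReal.ofReal (l * s) := by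
    intro t
    have h1 : damageExt f l 1 = l := if_pos rfl
    simp only [SPF.linPair, h1]
    norm_num [← mul_pow, Real.sqrt_sq (mul_nonneg hl hs)]
  simp only [this]
  rw [MeasureTheory.setLIntegral_const]
  simp [Real.volume_Ioo]

lemma SPF.sqrt_ge₁ (X Y u w : ℝ) : |X| * |u| ≤ Real.sqrt (X^2 * u^2 + Y^2 * w^2) := by
  rw [← abs_mul, ← Real.sqrt_sq_eq_abs, mul_pow]
  exact Real.sqrt_le_sqrt (le_add_of_nonneg_right (by positivity))

lemma SPF.sqrt_ge₂ (X Y u w : ℝ) : |Y| * |w| ≤ Real.sqrt (X^2 * u^2 + Y^2 * w^2) := by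
  rw [← abs_mul, ← Real.sqrt_sq_eq_abs, mul_pow]
  exact Real.sqrt_le_sqrt (le_add_of_nonneg_left (by positivity))

lemma SPF.upper (f : ℝ → ℝ) {l s : ℝ} (hl : 0 ≤ l) (hs : 0 ≤ s) :
    (⨅ (P : H1Pair 1) (_ : P.Admissible s), surfEnergy f l P) ≤ ENNReal.ofReal (l * s) := by
  refine le_trans (iInf₂_le (SPF.linPair s) (SPF.linPair_adm s)) ?_
  rw [SPF.energy_linPair f l s hl hs]

lemma SPF.lower (f : ℝ → ℝ) {l ε c s : ℝ} (hl : 0 ≤ l) (hε : 0 ≤ ε)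
    (hfnn : ∀ x ∈ Ico (0:ℝ) 1, 0 ≤ f x) (hc1 : c < 1)
    (hc2 : ∀ x ∈ Ioo c 1, l - ε ≤ (1 - x) * f x)
    (hs : 0 < s) (hκ : (l - ε) * s ≤ ((1 - c)/2) * ((1 - c)/2))
    (P : H1Pair 1) (hP : P.Admissible s) :
    ENNReal.ofReal ((l - ε) * s) ≤ surfEnergy f l P := by
  obtain ⟨hrange, ha0, ha1, hb0, hb1⟩ := hP
  set C := max (l - ε) 0 with hCdef
  have hC0 : 0 ≤ C := le_max_right _ _
  have hCle : l - ε ≤ C := le_max_left _ _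
  by_cases hcase : ∀ t ∈ Icc (0:ℝ) 1, c < P.b t
  · -- β stays above c: use the α'-term
    have key : ∀ t : ℝ, (Ioo (0:ℝ) 1).indicator
        (fun t => ENNReal.ofReal (C * |P.da t|)) t
        ≤ ENNReal.ofReal (Real.sqrt ((damageExt f l (P.b t))^2 * (P.da t)^2
          + (1 - P.b t)^2 * (P.db t)^2)) := by
      intro t
      by_cases ht : t ∈ Ioo (0:ℝ) 1
      · rw [Set.indicator_of_mem ht]
        apply ENNReal.ofReal_le_ofReal
        refine le_trans ?_ (SPF.sqrt_ge₁ _ _ _ _)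
        refine mul_le_mul_of_nonneg_right ?_ (abs_nonneg _)
        have hmem := hrange t (Ioo_subset_Icc_self ht)
        rcases eq_or_lt_of_le hmem.2 with h1 | h1
        · have hde : damageExt f l (P.b t) = l := by rw [h1]; exact if_pos rfl
          rw [hde, abs_of_nonneg hl]
          exact max_le (by linarith) hl
        · have hde : damageExt f l (P.b t) = (1 - P.b t) * f (P.b t) :=
            if_neg (ne_of_lt h1)
          rw [hde]
          have hle := hc2 (P.b t) ⟨hcase t (Ioo_subset_Icc_self ht), h1⟩
          have hpos : 0 ≤ (1 - P.b t) * f (P.b t) :=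
            mul_nonneg (by linarith) (hfnn _ ⟨hmem.1, h1⟩)
          exact le_trans (max_le hle hpos) (le_abs_self _)
      · rw [Set.indicator_of_notMem ht]; exact zero_le
    have hda : IntegrableOn P.da (Ioo (0:ℝ) 1) := P.da_mem.integrable (by norm_num)
    have hsum : ∫ t in Ioo (0:ℝ) 1, P.da t = s := by
      have h := P.a_ftc 1 ⟨zero_le_one, le_rfl⟩
      rw [ha0, ha1, MeasureTheory.integral_Ioc_eq_integral_Ioo] at h
      linarith
    have e1 : ENNReal.ofReal (∫ t in Ioo (0:ℝ) 1, C * |P.da t|)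
        = ∫⁻ t in Ioo (0:ℝ) 1, ENNReal.ofReal (C * |P.da t|) :=
      ofReal_integral_eq_lintegral_ofReal (hda.abs.const_mul C)
        (Filter.Eventually.of_forall fun t => by positivity)
    have e2 : C * s ≤ ∫ t in Ioo (0:ℝ) 1, C * |P.da t| := by
      rw [MeasureTheory.integral_const_mul]
      refine mul_le_mul_of_nonneg_left ?_ hC0
      calc s = |∫ t in Ioo (0:ℝ) 1, P.da t| := by rw [hsum]; exact (abs_of_pos hs).symm
        _ ≤ ∫ t in Ioo (0:ℝ) 1, |P.da t| := by
            simpa [Real.norm_eq_abs] using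
              MeasureTheory.norm_integral_le_integral_norm
                (μ := volume.restrict (Ioo (0:ℝ) 1)) P.da
    have e3 : ∫⁻ t in Ioo (0:ℝ) 1, ENNReal.ofReal (C * |P.da t|) ≤ surfEnergy f l P := by
      unfold surfEnergy
      have heq : ∫⁻ t in Ioo (0:ℝ) 1, (Ioo (0:ℝ) 1).indicator
          (fun t => ENNReal.ofReal (C * |P.da t|)) t
          = ∫⁻ t in Ioo (0:ℝ) 1, ENNReal.ofReal (C * |P.da t|) := by
        rw [MeasureTheory.lintegral_indicator measurableSet_Ioo,
          MeasureTheory.Measure.restrict_restrict measurableSet_Ioo, Set.inter_self]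
      rw [← heq]
      exact MeasureTheory.lintegral_mono key
    calc ENNReal.ofReal ((l - ε) * s) ≤ ENNReal.ofReal (C * s) :=
          ENNReal.ofReal_le_ofReal (mul_le_mul_of_nonneg_right hCle hs.le)
      _ ≤ ENNReal.ofReal (∫ t in Ioo (0:ℝ) 1, C * |P.da t|) := ENNReal.ofReal_le_ofReal e2
      _ = ∫⁻ t in Ioo (0:ℝ) 1, ENNReal.ofReal (C * |P.da t|) := e1
      _ ≤ surfEnergy f l P := e3
  · -- β dips below c: use the β'-term
    push_neg at hcase
    obtain ⟨v, hv, hbv⟩ := hcase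
    set d := (1 + c)/2 with hd
    have hcd : c < d := by rw [hd]; linarith
    have hd1 : d < 1 := by rw [hd]; linarith
    have hv1 : v < 1 := lt_of_le_of_ne hv.2 (by rintro rfl; rw [hb1] at hbv; linarith)
    set S := {t ∈ Icc (0:ℝ) v | d ≤ P.b t} with hS
    have hScl : IsClosed S := by
      have hSeq : S = Icc (0:ℝ) v ∩ P.b ⁻¹' (Ici d) := by
        ext t; exact Iff.rfl
      rw [hSeq]
      exact ContinuousOn.preimage_isClosed_of_isClosed
        ((SPF.cont_b P).mono (Icc_subset_Icc le_rfl hv.2)) isClosed_Icc isClosed_Ici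
    have h0S : (0:ℝ) ∈ S := ⟨⟨le_rfl, hv.1⟩, by rw [hb0]; linarith⟩
    have hbdd : BddAbove S := ⟨v, fun t ht => ht.1.2⟩
    set u := sSup S with hu
    have huS : u ∈ S := hScl.csSup_mem ⟨0, h0S⟩ hbdd
    have hu0 : 0 ≤ u := huS.1.1
    have huv : u ≤ v := huS.1.2
    have hbu : d ≤ P.b u := huS.2
    have hune : u ≠ v := by intro heq; rw [heq] at hbu; linarith
    have hulv : u < v := lt_of_le_of_ne huv hune
    have hbmid : ∀ t ∈ Ioc u v, P.b t ≤ d := by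
      intro t ht
      by_contra h
      push_neg at h
      have htS : t ∈ S := ⟨⟨hu0.trans ht.1.le, ht.2⟩, h.le⟩
      exact absurd (le_csSup hbdd htS) (not_le.mpr ht.1)
    have hsub : Ioc u v ⊆ Ioo (0:ℝ) 1 :=
      fun t ht => ⟨lt_of_le_of_lt hu0 ht.1, lt_of_le_of_lt ht.2 hv1⟩
    have key : ∀ t : ℝ, (Ioc u v).indicator
        (fun t => ENNReal.ofReal ((1 - d) * |P.db t|)) t
        ≤ ENNReal.ofReal (Real.sqrt ((damageExt f l (P.b t))^2 * (P.da t)^2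
          + (1 - P.b t)^2 * (P.db t)^2)) := by
      intro t
      by_cases ht : t ∈ Ioc u v
      · rw [Set.indicator_of_mem ht]
        apply ENNReal.ofReal_le_ofReal
        refine le_trans ?_ (SPF.sqrt_ge₂ _ _ _ _)
        refine mul_le_mul_of_nonneg_right ?_ (abs_nonneg _)
        have hbt := hbmid t ht
        calc (1 - d) ≤ 1 - P.b t := by linarith
          _ ≤ |1 - P.b t| := le_abs_self _
      · rw [Set.indicator_of_notMem ht]; exact zero_le
    have e3 : ∫⁻ t in Ioc u v, ENNReal.ofReal ((1 - d) * |P.db t|) ≤ surfEnergy f l P := by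
      unfold surfEnergy
      have heq : ∫⁻ t in Ioo (0:ℝ) 1, (Ioc u v).indicator
          (fun t => ENNReal.ofReal ((1 - d) * |P.db t|)) t
          = ∫⁻ t in Ioc u v, ENNReal.ofReal ((1 - d) * |P.db t|) := by
        rw [MeasureTheory.lintegral_indicator measurableSet_Ioc,
          MeasureTheory.Measure.restrict_restrict measurableSet_Ioc,
          Set.inter_eq_left.mpr hsub]
      rw [← heq]
      exact MeasureTheory.lintegral_mono key
    have e2 := SPF.lint_abs_ge P hu0 huv hv.2 (C := 1 - d) (by linarith)
    have habs : d - c ≤ |P.b v - P.b u| := by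
      rw [abs_sub_comm]
      calc d - c ≤ P.b u - P.b v := by linarith
        _ ≤ |P.b u - P.b v| := le_abs_self _
    calc ENNReal.ofReal ((l - ε) * s) ≤ ENNReal.ofReal ((1 - d) * (d - c)) := by
          apply ENNReal.ofReal_le_ofReal
          have hdd : (1 - d) * (d - c) = ((1 - c)/2) * ((1 - c)/2) := by rw [hd]; ring
          linarith
      _ ≤ ENNReal.ofReal ((1 - d) * |P.b v - P.b u|) :=
          ENNReal.ofReal_le_ofReal (mul_le_mul_of_nonneg_left habs (by linarith))
      _ ≤ ∫⁻ t in Ioc u v, ENNReal.ofReal ((1 - d) * |P.db t|) := e2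
      _ ≤ surfEnergy f l P := e3


/-- The surface energy density `g` satisfies `lim_{s→0⁺} g(s)/s = ℓ`,
i.e. `g` has slope `ℓ` at the origin. -/
theorem surfDensity_slope_at_zero (f : ℝ → ℝ) (l : ℝ)
    (hf : AdmissibleDamage f l) :
    Filter.Tendsto (fun s => surfDensity f l s / s) (nhdsWithin 0 (Set.Ioi 0))
      (nhds l) := by
  obtain ⟨hfc, hmono, hnn, hzero, hl, hlim⟩ := hf
  rw [Metric.tendsto_nhdsWithin_nhds]
  intro ε hε
  have hev : ∀ᶠ x in 𝓝[<] (1:ℝ), l - ε/2 < (1 - x) * f x :=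
    hlim.eventually (eventually_gt_nhds (by linarith))
  obtain ⟨c, hc1, hc2⟩ := mem_nhdsLT_iff_exists_Ioo_subset.mp hev
  rw [Set.mem_Iio] at hc1
  set κ := ((1 - c)/2) * ((1 - c)/2) with hκdef
  have hκpos : 0 < κ := by
    have h2 : 0 < (1 - c)/2 := by linarith
    exact mul_pos h2 h2
  refine ⟨κ / (l + 1), by positivity, ?_⟩
  intro s hs hd
  have hs0 : 0 < s := hs
  have hsd : s < κ / (l + 1) := by
    rw [Real.dist_eq, sub_zero, abs_of_pos hs0] at hd; exact hd
  have hκs : (l - ε/2) * s ≤ κ := by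
    have h1 : (l - ε/2) * s ≤ l * s := by nlinarith
    have h2 : l * s ≤ l * (κ/(l+1)) := mul_le_mul_of_nonneg_left hsd.le hl.le
    have h4 : l / (l+1) ≤ 1 := by rw [div_le_one (by linarith)]; linarith
    have h3 : l * (κ/(l+1)) ≤ κ := by
      calc l * (κ/(l+1)) = κ * (l/(l+1)) := by ring
        _ ≤ κ * 1 := mul_le_mul_of_nonneg_left h4 hκpos.le
        _ = κ := mul_one κ
    linarith
  set I := ⨅ (P : H1Pair 1) (_ : P.Admissible s), surfEnergy f l P with hIdef
  have hub : I ≤ ENNReal.ofReal (l * s) := SPF.upper f hl.le hs0.le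
  have hlb : ENNReal.ofReal ((l - ε/2) * s) ≤ I :=
    le_iInf₂ fun P hP => SPF.lower f hl.le (by linarith) hnn hc1
      (fun x hx => (hc2 hx).le) hs0 hκs P hP
  have hItop : I ≠ ⊤ := ne_top_of_le_ne_top ENNReal.ofReal_ne_top hub
  have hg : surfDensity f l s = I.toReal := by rw [surfDensity, ← hIdef]
  have hub' : surfDensity f l s ≤ l * s := by
    rw [hg]
    calc I.toReal ≤ (ENNReal.ofReal (l*s)).toReal :=
          ENNReal.toReal_mono ENNReal.ofReal_ne_top hub
      _ = l * s := ENNReal.toReal_ofReal (by positivity)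
  have hlb' : (l - ε/2) * s ≤ surfDensity f l s := by
    rw [hg]
    have h1 : (ENNReal.ofReal ((l - ε/2) * s)).toReal ≤ I.toReal :=
      ENNReal.toReal_mono hItop hlb
    have h2 : (l - ε/2) * s ≤ (ENNReal.ofReal ((l - ε/2) * s)).toReal := by
      rcases le_or_gt ((l - ε/2) * s) 0 with h | h
      · exact h.trans ENNReal.toReal_nonneg
      · rw [ENNReal.toReal_ofReal h.le]
    linarith
  have hq1 : surfDensity f l s / s ≤ l := (div_le_iff₀ hs0).mpr (by linarith)
  have hq2 : l - ε/2 ≤ surfDensity f l s / s := (le_div_iff₀ hs0).mpr (by linarith)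
  rw [Real.dist_eq, abs_lt]
  constructor <;> linarith
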